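/- Let r ≥ 2, let F : ℝ^d → ℝ^d be a C^r-smooth vector field, let W : ℝ^d → ℝ be a C^{r+1}-smooth proper function, and let Q ∈ ℝ be such that L_F W(x) ≤ 0 whenever W(x) > Q. Suppose φ, Φ : (Q,∞) → (0,∞) are smooth positive functions with φ ≤ Φ² such that for every x with W(x) > Q: |L_F W(x)| + Σ_{k=2}^{r} |L_F^k W(x)|² ≥ φ(W(x)), and |L_F^k W(x)| ≤ Φ(W(x)) for all 1 ≤ k ≤ r+1. Define B_k := 2^{(r−k)(r−k+1)} (Φ²/φ)^{r−k} for k = 2, …, r, and let A : (Q,∞) → ℝ be a smooth function whose derivative satisfies A' > Φ² Σ_{k=2}^{r} |B_k'| + Φ B_2 + 1 on (Q,∞). Then the function W^♯(x) := A(W(x)) − Σ_{k=2}^{r} B_k(W(x)) · L_F^{k−1}W(x) · L_F^{k}W(x) satisfies L_F W^♯(x) ≤ −φ(W(x))/4 for every x with W(x) > Q. -/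

import Mathlib

open Finset

noncomputable section

/-- Iterated Lie derivative `L_F^k g` of `g` along the vector field `F`. -/
def iterLie {E : Type*} [NormedAddCommGroup E] [NormedSpace ℝ E]
    (F : E → E) : ℕ → (E → ℝ) → E → ℝ
  | 0 => fun g => g
  | k + 1 => fun g x => fderiv ℝ (iterLie F k g) x (F x)

/-- The coefficient `B_k = 2^{(r−k)(r−k+1)} (Φ²/φ)^{r−k}`. -/
def Bcoef (r : ℕ) (φ Φ : ℝ → ℝ) (k : ℕ) (w : ℝ) : ℝ :=
  (2 : ℝ) ^ ((r - k) * (r - k + 1)) * (Φ w ^ 2 / φ w) ^ (r - k)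

lemma iterLie_contDiff {E : Type*} [NormedAddCommGroup E] [NormedSpace ℝ E]
    {r : ℕ} {F : E → E} (hF : ContDiff ℝ r F)
    {W : E → ℝ} (hW : ContDiff ℝ (r + 1 : ℕ) W) :
    ∀ k, k ≤ r → ContDiff ℝ ((r + 1 - k : ℕ)) (iterLie F k W) := by
  intro k
  induction k with
  | zero => intro _; simpa [iterLie] using hW
  | succ k ih =>
    intro hk
    have hk' : k ≤ r := Nat.le_of_succ_le hk
    have h1 : ContDiff ℝ ((r - k : ℕ)) (fderiv ℝ (iterLie F k W)) := by
      refine (ih hk').fderiv_right ?_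
      norm_cast
      omega
    have h2 : ContDiff ℝ ((r - k : ℕ)) (iterLie F (k+1) W) := by
      show ContDiff ℝ ((r - k : ℕ)) fun x => fderiv ℝ (iterLie F k W) x (F x)
      exact h1.clm_apply (hF.of_le (by norm_cast; omega))
    have : r + 1 - (k+1) = r - k := by omega
    rw [this]
    exact h2

open Finset

lemma sum_shift (a b : ℕ) (g : ℕ → ℝ) :
    ∑ k ∈ Finset.Icc (a+1) (b+1), g (k-1) = ∑ j ∈ Finset.Icc a b, g j := by
  rw [← Finset.map_add_right_Icc, Finset.sum_map]
  simp [addRightEmbedding]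

lemma sum_shift' (a b : ℕ) (g : ℕ → ℝ) :
    ∑ k ∈ Finset.Icc a b, g (k+1) = ∑ j ∈ Finset.Icc (a+1) (b+1), g j := by
  rw [← Finset.map_add_right_Icc, Finset.sum_map]
  simp [addRightEmbedding]

lemma sum_bot (a b : ℕ) (h : a ≤ b) (g : ℕ → ℝ) :
    ∑ k ∈ Finset.Icc a b, g k = g a + ∑ k ∈ Finset.Icc (a+1) b, g k := by
  rw [show Finset.Icc a b = insert a (Finset.Icc (a+1) b) from
    Finset.ext fun x => by simp only [Finset.mem_Icc, Finset.mem_insert]; omega]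
  rw [Finset.sum_insert (by simp)]

lemma amgm4 (p q b u v : ℝ) (hp : 0 < p) (h : 4*b^2 = p*q) :
    -(p*u^2 + q*v^2)/4 ≤ b*(u*v) := by
  have hv : p*(q*v^2) = 4*b^2*v^2 := by linear_combination (-v^2) * h
  nlinarith [sq_nonneg (p*u + 2*b*v), hp, hv]

lemma pow_helper (y : ℝ) (A B A1 B1 A2 B2 : ℕ) (h1 : 2 + 2*A = A1 + A2) (h2 : 2*B = B1 + B2) :
    4 * ((2:ℝ)^A * y^B)^2 = ((2:ℝ)^A1 * y^B1) * ((2:ℝ)^A2 * y^B2) := by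
  rw [show (4:ℝ) = 2^2 by norm_num, mul_pow, ← pow_mul, ← pow_mul]
  rw [show (2:ℝ)^2 * ((2:ℝ)^(A*2) * y^(B*2)) = 2^(2+A*2) * y^(B*2) by rw [pow_add]; ring]
  rw [show 2+A*2 = A1+A2 by omega, show B*2 = B1+B2 by omega, pow_add, pow_add]; ring

lemma term_bd (b u v w Φ : ℝ) (hΦ : 0 ≤ Φ) (hv : |v| ≤ Φ) (hw : |w| ≤ Φ) :
    -(b * (u * (v * w))) ≤ |b| * (Φ^2 * |u|) := by
  calc -(b * (u * (v * w))) ≤ |b * (u * (v * w))| := neg_le_abs _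
    _ = |b| * (|u| * (|v| * |w|)) := by rw [abs_mul, abs_mul, abs_mul]
    _ ≤ |b| * (Φ^2 * |u|) := by
        apply mul_le_mul_of_nonneg_left _ (abs_nonneg b)
        nlinarith [mul_le_mul hv hw (abs_nonneg w) hΦ, abs_nonneg u, abs_nonneg v, abs_nonneg w]

set_option maxHeartbeats 1000000 in
lemma key_ineq (r : ℕ) (hr : 2 ≤ r) (φ Φ A' : ℝ) (B B' a : ℕ → ℝ)
    (hφpos : 0 < φ) (hΦpos : 0 < Φ) (hφΦ : φ ≤ Φ^2)
    (hB : ∀ k, B k = 2^((r-k)*(r-k+1)) * (Φ^2/φ)^(r-k))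
    (ha1 : a 1 ≤ 0)
    (hlow : φ ≤ |a 1| + ∑ k ∈ Finset.Icc 2 r, (a k)^2)
    (hup : ∀ k ∈ Finset.Icc 1 (r+1), |a k| ≤ Φ)
    (hA' : Φ^2 * (∑ k ∈ Finset.Icc 2 r, |B' k|) + Φ * B 2 + 1 < A') :
    A' * a 1 - ∑ k ∈ Finset.Icc 2 r,
      (B' k * (a 1 * (a (k-1) * a k)) + B k * a k ^ 2 + B k * (a (k-1) * a (k+1)))
      ≤ -φ/4 := by
  have hub : ∀ k, 1 ≤ k → k ≤ r+1 → |a k| ≤ Φ := fun k h1 h2 =>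
    hup k (by simp only [Finset.mem_Icc]; omega)
  have hQ1 : (1:ℝ) ≤ Φ^2/φ := (one_le_div hφpos).2 hφΦ
  have hQpos : (0:ℝ) < Φ^2/φ := lt_of_lt_of_le one_pos hQ1
  have hBpos : ∀ k, 0 < B k := by intro k; rw [hB]; positivity
  have hB1 : ∀ k, 1 ≤ B k := by
    intro k; rw [hB]
    have h1 : (1:ℝ) ≤ 2 ^ ((r-k)*(r-k+1)) := one_le_pow₀ (by norm_num)
    have h2 : (1:ℝ) ≤ (Φ^2/φ) ^ (r-k) := one_le_pow₀ hQ1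
    nlinarith
  rw [Finset.sum_add_distrib, Finset.sum_add_distrib]
  set T1 := ∑ k ∈ Finset.Icc 2 r, B' k * (a 1 * (a (k-1) * a k)) with hT1def
  set S := ∑ k ∈ Finset.Icc 2 r, B k * a k ^ 2 with hSdef
  set C := ∑ k ∈ Finset.Icc 2 r, B k * (a (k-1) * a (k+1)) with hCdef
  -- bound on T1
  have hT1 : -T1 ≤ Φ^2 * (∑ k ∈ Finset.Icc 2 r, |B' k|) * |a 1| := by
    rw [hT1def, ← Finset.sum_neg_distrib]
    calc ∑ k ∈ Finset.Icc 2 r, -(B' k * (a 1 * (a (k-1) * a k)))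
        ≤ ∑ k ∈ Finset.Icc 2 r, |B' k| * (Φ^2 * |a 1|) := by
          refine Finset.sum_le_sum fun k hk => ?_
          simp only [Finset.mem_Icc] at hk
          exact term_bd _ _ _ _ _ hΦpos.le (hub _ (by omega) (by omega))
            (hub _ (by omega) (by omega))
      _ = Φ^2 * (∑ k ∈ Finset.Icc 2 r, |B' k|) * |a 1| := by
          rw [← Finset.sum_mul]; ring
  -- bound on the k = 2 cross term
  have hc2 : -(B 2 * (a 1 * a 3)) ≤ Φ * B 2 * |a 1| := by
    have h3 : |a 3| ≤ Φ := hub 3 (by omega) (by omega)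
    calc -(B 2 * (a 1 * a 3)) ≤ |B 2 * (a 1 * a 3)| := neg_le_abs _
      _ = B 2 * (|a 1| * |a 3|) := by rw [abs_mul, abs_mul, abs_of_pos (hBpos 2)]
      _ ≤ B 2 * (|a 1| * Φ) :=
          mul_le_mul_of_nonneg_left (mul_le_mul_of_nonneg_left h3 (abs_nonneg _)) (hBpos 2).le
      _ = Φ * B 2 * |a 1| := by ring
  -- bound S from below by the unweighted sum
  have hS0 : ∑ k ∈ Finset.Icc 2 r, (a k)^2 ≤ S := by
    rw [hSdef]
    exact Finset.sum_le_sum fun k _ => by nlinarith [hB1 k, sq_nonneg (a k)]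
  have hSnn : 0 ≤ S := by
    rw [hSdef]; exact Finset.sum_nonneg fun k _ => mul_nonneg (hBpos k).le (sq_nonneg _)
  -- main cross bound
  have hC : -C ≤ Φ * B 2 * |a 1| + (1/2) * S + φ/4 := by
    by_cases hr3 : 3 ≤ r
    · -- split C = c2 + middle + top
      have hsplit : C = B 2 * (a 1 * a 3)
          + (∑ k ∈ Finset.Icc 3 (r-1), B k * (a (k-1) * a (k+1)))
          + B r * (a (r-1) * a (r+1)) := by
        rw [hCdef, sum_bot 2 r hr]
        have htop := Finset.sum_Icc_succ_top (a := 3) (b := r-1)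
          (by omega) (fun k => B k * (a (k-1) * a (k+1)))
        rw [show r-1+1 = r by omega] at htop
        rw [htop]
        norm_num
        ring
      -- top cross term
      have hcr : -(B r * (a (r-1) * a (r+1))) ≤ (1/4) * (B (r-1) * a (r-1)^2) + φ/4 := by
        have hBr : B r = 1 := by rw [hB]; simp
        have hBr1 : B (r-1) = 4 * (Φ^2/φ) := by
          rw [hB, show r - (r-1) = 1 by omega]; norm_num
        have h1 : |a (r+1)| ≤ Φ := hub _ (by omega) (by omega)
        have h2 : -(a (r-1) * a (r+1)) ≤ Φ * |a (r-1)| := by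
          calc -(a (r-1) * a (r+1)) ≤ |a (r-1) * a (r+1)| := neg_le_abs _
            _ = |a (r-1)| * |a (r+1)| := abs_mul _ _
            _ ≤ |a (r-1)| * Φ := mul_le_mul_of_nonneg_left h1 (abs_nonneg _)
            _ = Φ * |a (r-1)| := mul_comm _ _
        have hexp2 : (Φ^2/φ) * a (r-1)^2 * φ = Φ^2 * a (r-1)^2 := by field_simp
        have h3 : Φ * |a (r-1)| ≤ (Φ^2/φ) * a (r-1)^2 + φ/4 := by
          nlinarith [sq_nonneg (Φ * |a (r-1)| - φ/2), sq_abs (a (r-1)), hexp2, hφpos,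
            abs_nonneg (a (r-1)), hΦpos]
        have h4 : (1/4) * (B (r-1) * a (r-1)^2) = (Φ^2/φ) * a (r-1)^2 := by rw [hBr1]; ring
        rw [hBr]
        nlinarith [h2, h3, h4]
      -- middle cross terms
      have hmid : -(∑ k ∈ Finset.Icc 3 (r-1), B k * (a (k-1) * a (k+1)))
          ≤ (∑ k ∈ Finset.Icc 3 (r-1), ((1/4) * (B (k-1) * a (k-1)^2)
              + (1/4) * (B (k+1) * a (k+1)^2))) := by
        rw [← Finset.sum_neg_distrib]
        refine Finset.sum_le_sum fun k hk => ?_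
        simp only [Finset.mem_Icc] at hk
        have hid : 4 * (B k)^2 = B (k-1) * B (k+1) := by
          obtain ⟨m, hm⟩ : ∃ m, r - k = m + 1 := ⟨r - k - 1, by omega⟩
          have e1 : r - (k-1) = m + 2 := by omega
          have e2 : r - (k+1) = m := by omega
          rw [hB, hB, hB, hm, e1, e2]
          exact pow_helper (Φ^2/φ) ((m+1)*(m+1+1)) (m+1) ((m+2)*(m+2+1)) (m+2)
            (m*(m+1)) m (by ring) (by ring)
        have := amgm4 (B (k-1)) (B (k+1)) (B k) (a (k-1)) (a (k+1)) (hBpos _) hid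
        linarith
      -- reindex the middle sums
      have hmidL : ∑ k ∈ Finset.Icc 3 (r-1), (1/4) * (B (k-1) * a (k-1)^2)
          = (1/4) * ∑ j ∈ Finset.Icc 2 (r-2), B j * a j^2 := by
        rw [Finset.mul_sum]
        have := sum_shift 2 (r-2) (fun j => (1/4) * (B j * a j^2))
        rw [show r-2+1 = r-1 by omega] at this
        exact this
      have hmidR : ∑ k ∈ Finset.Icc 3 (r-1), (1/4) * (B (k+1) * a (k+1)^2)
          = (1/4) * ∑ j ∈ Finset.Icc 4 r, B j * a j^2 := by
        rw [Finset.mul_sum]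
        have := sum_shift' 3 (r-1) (fun j => (1/4) * (B j * a j^2))
        rw [show r-1+1 = r by omega] at this
        exact this
      -- merge left part with the top quadratic term
      have hmerge : ∑ j ∈ Finset.Icc 2 (r-2), B j * a j^2 + B (r-1) * a (r-1)^2
          = ∑ j ∈ Finset.Icc 2 (r-1), B j * a j^2 := by
        have := Finset.sum_Icc_succ_top (a := 2) (b := r-2) (by omega)
          (fun j => B j * a j^2)
        rw [show r-2+1 = r-1 by omega] at this
        exact this.symm
      have hS1 : ∑ j ∈ Finset.Icc 2 (r-1), B j * a j^2 ≤ S := by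
        rw [hSdef]
        exact Finset.sum_le_sum_of_subset_of_nonneg
          (Finset.Icc_subset_Icc_right (by omega))
          (fun i _ _ => mul_nonneg (hBpos i).le (sq_nonneg _))
      have hS2 : ∑ j ∈ Finset.Icc 4 r, B j * a j^2 ≤ S := by
        rw [hSdef]
        refine Finset.sum_le_sum_of_subset_of_nonneg ?_
          (fun i _ _ => mul_nonneg (hBpos i).le (sq_nonneg _))
        intro i hi
        simp only [Finset.mem_Icc] at hi ⊢
        omega
      rw [hsplit]
      rw [Finset.sum_add_distrib] at hmid
      linarith
    · -- r = 2
      have hr2 : r = 2 := by omega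
      subst hr2
      have hC2 : C = B 2 * (a 1 * a 3) := by
        rw [hCdef, Finset.Icc_self, Finset.sum_singleton]
      rw [hC2]
      linarith [hc2, hSnn, hφpos]
  -- final assembly
  have ha1e : A' * a 1 = -(A' * |a 1|) := by rw [abs_of_nonpos ha1]; ring
  have hAb : (Φ^2 * (∑ k ∈ Finset.Icc 2 r, |B' k|) + Φ * B 2 + 1) * |a 1| ≤ A' * |a 1| :=
    mul_le_mul_of_nonneg_right hA'.le (abs_nonneg _)
  linarith [hT1, hC, hS0, hSnn, hAb, hlow, ha1e, abs_nonneg (a 1)]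

theorem stmt9 (d r : ℕ) (hr : 2 ≤ r)
    (F : EuclideanSpace ℝ (Fin d) → EuclideanSpace ℝ (Fin d)) (hF : ContDiff ℝ r F)
    (W : EuclideanSpace ℝ (Fin d) → ℝ) (hW : ContDiff ℝ (r + 1) W)
    (hproper : ∀ c : ℝ, IsCompact {x | W x ≤ c}) (Q : ℝ)
    (hnonstrict : ∀ x, Q < W x → iterLie F 1 W x ≤ 0)
    (φ Φ : ℝ → ℝ)
    (hφ : ContDiffOn ℝ (⊤ : ℕ∞) φ (Set.Ioi Q)) (hΦ : ContDiffOn ℝ (⊤ : ℕ∞) Φ (Set.Ioi Q))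
    (hφpos : ∀ w ∈ Set.Ioi Q, 0 < φ w) (hΦpos : ∀ w ∈ Set.Ioi Q, 0 < Φ w)
    (hφΦ : ∀ w ∈ Set.Ioi Q, φ w ≤ Φ w ^ 2)
    (hlower : ∀ x, Q < W x →
      φ (W x) ≤ |iterLie F 1 W x| + ∑ k ∈ Finset.Icc 2 r, (iterLie F k W x) ^ 2)
    (hupper : ∀ x, Q < W x → ∀ k ∈ Finset.Icc 1 (r + 1), |iterLie F k W x| ≤ Φ (W x))
    (A : ℝ → ℝ) (hA : ContDiffOn ℝ (⊤ : ℕ∞) A (Set.Ioi Q))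
    (hA' : ∀ w ∈ Set.Ioi Q,
      Φ w ^ 2 * ∑ k ∈ Finset.Icc 2 r, |deriv (Bcoef r φ Φ k) w|
          + Φ w * Bcoef r φ Φ 2 w + 1 < deriv A w) :
    ∀ x, Q < W x →
      fderiv ℝ (fun y => A (W y) -
          ∑ k ∈ Finset.Icc 2 r,
            Bcoef r φ Φ k (W y) * iterLie F (k - 1) W y * iterLie F k W y) x (F x)
        ≤ -φ (W x) / 4 := by
  intro x hx
  have hxQ : W x ∈ Set.Ioi Q := hx
  have hmem : Set.Ioi Q ∈ nhds (W x) := isOpen_Ioi.mem_nhds hx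
  have hW' : ContDiff ℝ ((r + 1 : ℕ)) W := by exact_mod_cast hW
  -- differentiability of iterated Lie derivatives
  have hdiff : ∀ k, k ≤ r → DifferentiableAt ℝ (iterLie F k W) x := by
    intro k hk
    have h := iterLie_contDiff hF hW' k hk
    exact (h.differentiable (by norm_cast; omega)).differentiableAt
  -- derivative facts for the one-dimensional functions
  have hφd : DifferentiableAt ℝ φ (W x) := (hφ.contDiffAt hmem).differentiableAt (by simp)
  have hΦd : DifferentiableAt ℝ Φ (W x) := (hΦ.contDiffAt hmem).differentiableAt (by simp)
  have hφne : φ (W x) ≠ 0 := (hφpos _ hxQ).ne'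
  have hBd : ∀ k, HasDerivAt (Bcoef r φ Φ k) (deriv (Bcoef r φ Φ k) (W x)) (W x) := by
    intro k
    refine DifferentiableAt.hasDerivAt ?_
    have : (Bcoef r φ Φ k) = fun w => (2:ℝ) ^ ((r - k) * (r - k + 1)) * (Φ w ^ 2 / φ w) ^ (r - k) := rfl
    rw [this]
    exact (((hΦd.pow 2).div hφd hφne).pow _).const_mul _
  have hAd : HasDerivAt A (deriv A (W x)) (W x) :=
    ((hA.contDiffAt hmem).differentiableAt (by simp)).hasDerivAt
  have hWf : HasFDerivAt W (fderiv ℝ W x) x :=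
    (hdiff 0 (by omega)).hasFDerivAt
  -- derivative of A ∘ W
  have hAW : HasFDerivAt (fun y => A (W y)) (deriv A (W x) • fderiv ℝ W x) x :=
    hAd.comp_hasFDerivAt x hWf
  -- derivative of each summand
  set D : ℕ → (EuclideanSpace ℝ (Fin d) →L[ℝ] ℝ) := fun k =>
    (Bcoef r φ Φ k (W x) * iterLie F (k-1) W x) • fderiv ℝ (iterLie F k W) x
    + iterLie F k W x • (Bcoef r φ Φ k (W x) • fderiv ℝ (iterLie F (k-1) W) x
        + iterLie F (k-1) W x • (deriv (Bcoef r φ Φ k) (W x) • fderiv ℝ W x)) with hD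
  have hks : ∀ k ∈ Finset.Icc 2 r, HasFDerivAt
      (fun y => Bcoef r φ Φ k (W y) * iterLie F (k-1) W y * iterLie F k W y) (D k) x := by
    intro k hk
    simp only [Finset.mem_Icc] at hk
    have hBW : HasFDerivAt (fun y => Bcoef r φ Φ k (W y))
        (deriv (Bcoef r φ Φ k) (W x) • fderiv ℝ W x) x :=
      (hBd k).comp_hasFDerivAt x hWf
    have h1 : HasFDerivAt (iterLie F (k-1) W) (fderiv ℝ (iterLie F (k-1) W) x) x :=
      (hdiff (k-1) (by omega)).hasFDerivAt
    have h2 : HasFDerivAt (iterLie F k W) (fderiv ℝ (iterLie F k W) x) x :=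
      (hdiff k (by omega)).hasFDerivAt
    exact (hBW.mul h1).mul h2
  have htotal := hAW.fun_sub (HasFDerivAt.fun_sum hks)
  rw [htotal.fderiv]
  have e1 : ∀ j, fderiv ℝ (iterLie F j W) x (F x) = iterLie F (j+1) W x := fun j => rfl
  have e0 : fderiv ℝ W x (F x) = iterLie F 1 W x := rfl
  have hEval : ((deriv A (W x)) • fderiv ℝ W x - ∑ k ∈ Finset.Icc 2 r, D k) (F x)
      = deriv A (W x) * iterLie F 1 W x - ∑ k ∈ Finset.Icc 2 r,
        (deriv (Bcoef r φ Φ k) (W x) * (iterLie F 1 W x * (iterLie F (k-1) W x * iterLie F k W x))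
          + Bcoef r φ Φ k (W x) * (iterLie F k W x) ^ 2
          + Bcoef r φ Φ k (W x) * (iterLie F (k-1) W x * iterLie F (k+1) W x)) := by
    simp only [hD, ContinuousLinearMap.coe_sub', Pi.sub_apply, ContinuousLinearMap.smul_apply,
      ContinuousLinearMap.coe_sum', Finset.sum_apply, ContinuousLinearMap.add_apply,
      smul_eq_mul, e0, e1]
    congr 1
    refine Finset.sum_congr rfl fun k hk => ?_
    simp only [Finset.mem_Icc] at hk
    rw [show k-1+1 = k by omega]
    ring
  rw [hEval]
  have hkey := key_ineq r hr (φ (W x)) (Φ (W x)) (deriv A (W x))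
    (fun k => Bcoef r φ Φ k (W x)) (fun k => deriv (Bcoef r φ Φ k) (W x))
    (fun k => iterLie F k W x)
    (hφpos _ hxQ) (hΦpos _ hxQ) (hφΦ _ hxQ)
    (fun k => rfl)
    (hnonstrict x hx) (hlower x hx) (hupper x hx) (hA' (W x) hxQ)
  convert hkey using 2
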